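/- arXiv:2104.08849 — 5 statements merged into one kernel-verified Lean document; each statement's English description precedes it below -/
import Mathlib

section
/- If η has distribution function x ↦ φ(e^{-x}) where φ is the Laplace transform of a positive random variable ν with E|ln ν| < ∞, then E[η] = γ + E[ln ν], where γ is the Euler–Mascheroni constant. -/
/-! If `E` is a standard exponential variable independent of `ν`, then
`P(log ν - log E ≤ x | ν) = P(E ≥ ν e^{-x} | ν) = exp(-e^{-x} ν)`, so `η` has the law of
`log ν - log E` (that is, `η = G + log ν` with `G = -log E` Gumbel).
Hence `E[η] = E[log ν] - E[log E]`, and `E[log E] = ∫₀^∞ log t e^{-t} dt = Γ'(1) = -γ`. -/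

open MeasureTheory ProbabilityTheory Real Set Filter Topology

theorem integral_log_mul_exp_neg_Ioi :
    ∫ t in Ioi (0 : ℝ), log t * exp (-t) = -eulerMascheroniConstant := by
  have hderiv := Complex.hasDerivAt_GammaIntegral (s := 1) (by simp)
  have hGamma : Complex.GammaIntegral =ᶠ[𝓝 1] Complex.Gamma := by
    filter_upwards [(Complex.continuous_re.isOpen_preimage _ isOpen_Ioi).mem_nhds
      (by simp : (1 : ℂ) ∈ Complex.re ⁻¹' Ioi 0)] with s hs
    exact (Complex.Gamma_eq_integral hs).symm
  have := (hderiv.congr_of_eventuallyEq hGamma.symm).unique Complex.hasDerivAt_Gamma_one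
  simp only [sub_self, Complex.cpow_zero, one_mul] at this
  have hC : ((∫ t in Ioi (0 : ℝ), log t * exp (-t) : ℝ) : ℂ) = -eulerMascheroniConstant := by
    simpa only [← integral_complex_ofReal, Complex.ofReal_mul] using this
  exact_mod_cast hC

theorem integrableOn_log_mul_exp_neg_Ioi :
    IntegrableOn (fun t : ℝ => log t * exp (-t)) (Ioi 0) := by
  -- a non-integrable function would have integral `0`, not `-γ < 0`
  by_contra h
  have := integral_undef h
  rw [integral_log_mul_exp_neg_Ioi] at this
  linarith [one_half_lt_eulerMascheroniConstant]

lemma exponentialPDF_eq_indicator (r : ℝ) :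
    exponentialPDF r = (Ici 0).indicator fun t => ENNReal.ofReal (r * exp (-(r * t))) := by
  ext t
  by_cases ht : 0 ≤ t <;> simp [exponentialPDF_eq, ht]

lemma expMeasure_eq_withDensity (r : ℝ) :
    expMeasure r = (volume.restrict (Ici 0)).withDensity
      fun t => ENNReal.ofReal (r * exp (-(r * t))) := by
  rw [← withDensity_indicator measurableSet_Ici, ← exponentialPDF_eq_indicator]
  rfl

instance nullSingletonClass_expMeasure (r : ℝ) : NullSingletonClass (expMeasure r) :=
  ⟨fun _ => withDensity_absolutelyContinuous _ _ (measure_singleton _)⟩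

instance isProbabilityMeasure_expMeasure_one : IsProbabilityMeasure (expMeasure 1) :=
  isProbabilityMeasure_expMeasure one_pos

lemma expMeasure_Ici {r c : ℝ} (hr : 0 < r) (hc : 0 ≤ c) :
    expMeasure r (Ici c) = ENNReal.ofReal (exp (-(r * c))) := by
  have := isProbabilityMeasure_expMeasure hr
  have hcdf := cdf_expMeasure_eq hr c
  rw [if_pos hc, cdf_eq_real] at hcdf
  rw [← compl_Iio, prob_compl_eq_one_sub measurableSet_Iio, measure_congr Iio_ae_eq_Iic,
    ← ofReal_measureReal, hcdf, ← ENNReal.ofReal_one,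
    ← ENNReal.ofReal_sub _ (hcdf ▸ measureReal_nonneg)]
  ring_nf

lemma expMeasure_Iic_zero {r : ℝ} (hr : 0 < r) : expMeasure r (Iic 0) = 0 := by
  have := isProbabilityMeasure_expMeasure hr
  have hcdf := cdf_expMeasure_eq hr 0
  simp only [le_refl, if_true, mul_zero, neg_zero, exp_zero, sub_self, cdf_eq_real] at hcdf
  exact (measureReal_eq_zero_iff (measure_ne_top _ _)).mp hcdf

lemma integrable_expMeasure_iff {r : ℝ} (hr : 0 ≤ r) {g : ℝ → ℝ} :
    Integrable g (expMeasure r) ↔ IntegrableOn (fun t => g t * (r * exp (-(r * t)))) (Ioi 0) := by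
  rw [expMeasure_eq_withDensity, integrable_withDensity_iff (by fun_prop)
    (ae_of_all _ fun _ => ENNReal.ofReal_lt_top), ← integrableOn_Ici_iff_integrableOn_Ioi]
  refine integrable_congr (ae_of_all _ fun t => ?_)
  simp only [ENNReal.toReal_ofReal (by positivity : 0 ≤ r * exp (-(r * t)))]

lemma integral_expMeasure {r : ℝ} (hr : 0 ≤ r) (g : ℝ → ℝ) :
    ∫ t, g t ∂expMeasure r = ∫ t in Ioi 0, g t * (r * exp (-(r * t))) := by
  rw [expMeasure_eq_withDensity, integral_withDensity_eq_integral_toReal_smul (by fun_prop)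
    (ae_of_all _ fun _ => ENNReal.ofReal_lt_top), ← integral_Ici_eq_integral_Ioi]
  refine integral_congr_ae (ae_of_all _ fun t => ?_)
  simp only [ENNReal.toReal_ofReal (by positivity : 0 ≤ r * exp (-(r * t))), smul_eq_mul, mul_comm]

lemma integrable_log_expMeasure_one : Integrable log (expMeasure 1) := by
  simpa only [integrable_expMeasure_iff zero_le_one, one_mul] using integrableOn_log_mul_exp_neg_Ioi

lemma integral_log_expMeasure_one : ∫ t, log t ∂expMeasure 1 = -eulerMascheroniConstant := by
  simpa only [integral_expMeasure zero_le_one, one_mul] using integral_log_mul_exp_neg_Ioi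

lemma log_sub_log_le_iff {a t x : ℝ} (ha : 0 < a) (ht : 0 < t) :
    log a - log t ≤ x ↔ a * exp (-x) ≤ t := by
  rw [sub_le_comm, le_log_iff_exp_le ht, exp_sub, exp_log ha, div_eq_mul_inv, exp_neg]

lemma expMeasure_one_setOf_log_sub_log_le {a : ℝ} (ha : 0 < a) (x : ℝ) :
    expMeasure 1 {t | log a - log t ≤ x} = ENNReal.ofReal (exp (-exp (-x) * a)) := by
  have hpos : 0 < a * exp (-x) := by positivity
  have hset : {t | log a - log t ≤ x} ∩ Ioi 0 = Ici (a * exp (-x)) := by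
    ext t
    simp only [mem_inter_iff, mem_ofPred_eq, mem_Ioi, mem_Ici]
    exact ⟨fun ⟨hle, ht⟩ => (log_sub_log_le_iff ha ht).mp hle,
      fun h => ⟨(log_sub_log_le_iff ha (hpos.trans_le h)).mpr h, hpos.trans_le h⟩⟩
  -- `log` is junk on `t ≤ 0`, a null set for `expMeasure 1`
  rw [← measure_inter_conull (t := Ioi 0) (by rw [compl_Ioi]; exact expMeasure_Iic_zero one_pos),
    hset, expMeasure_Ici one_pos hpos.le]
  ring_nf

lemma integrable_exp_neg_mul {Ω : Type*} [MeasurableSpace Ω] {μ : Measure Ω} [IsFiniteMeasure μ]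
    {ν : Ω → ℝ} (hν : AEMeasurable ν μ) (hν0 : ∀ᵐ ω ∂μ, 0 ≤ ν ω) {u : ℝ} (hu : 0 ≤ u) :
    Integrable (fun ω => exp (-u * ν ω)) μ := by
  refine (integrable_const (1 : ℝ)).mono' (by fun_prop) ?_
  filter_upwards [hν0] with ω hω
  rw [norm_of_nonneg (exp_nonneg _), exp_le_one_iff, neg_mul]
  exact neg_nonpos.mpr (mul_nonneg hu hω)

lemma prod_expMeasure_one_setOf_log_sub_log_le {Ω : Type*} [MeasurableSpace Ω] {μ : Measure Ω}
    [IsFiniteMeasure μ] {ν : Ω → ℝ} (hν : Measurable ν) (hνpos : ∀ᵐ ω ∂μ, 0 < ν ω) (x : ℝ) :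
    μ.prod (expMeasure 1) {p | log (ν p.1) - log p.2 ≤ x}
      = ENNReal.ofReal (∫ ω, exp (-exp (-x) * ν ω) ∂μ) := by
  rw [Measure.prod_apply (measurableSet_le (by fun_prop) measurable_const),
    ofReal_integral_eq_lintegral_ofReal
      (integrable_exp_neg_mul hν.aemeasurable (hνpos.mono fun _ => le_of_lt) (exp_nonneg _))
      (ae_of_all _ fun _ => exp_nonneg _)]
  refine lintegral_congr_ae ?_
  filter_upwards [hνpos] with ω hω
  exact expMeasure_one_setOf_log_sub_log_le hω x

lemma identDistrib_of_measure_setOf_le_eq {α β : Type*} [MeasurableSpace α] [MeasurableSpace β]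
    {μ : Measure α} {ν : Measure β} [IsFiniteMeasure μ] [IsFiniteMeasure ν] {f : α → ℝ} {g : β → ℝ}
    (hf : AEMeasurable f μ) (hg : AEMeasurable g ν)
    (h : ∀ x, μ {a | f a ≤ x} = ν {b | g b ≤ x}) : IdentDistrib f g μ ν where
  aemeasurable_fst := hf
  aemeasurable_snd := hg
  map_eq := Measure.ext_of_Iic _ _ fun x => by
    rw [Measure.map_apply_of_aemeasurable hf measurableSet_Iic,
      Measure.map_apply_of_aemeasurable hg measurableSet_Iic]
    exact h x

theorem mean_delta_eq_gamma_add_meanLog_general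
    {Ω : Type*} [MeasurableSpace Ω] (μ : Measure Ω) [IsProbabilityMeasure μ]
    {Ω' : Type*} [MeasurableSpace Ω'] (μ' : Measure Ω') [IsProbabilityMeasure μ']
    (ν : Ω → ℝ) (hν : Measurable ν) (hνpos : ∀ᵐ ω ∂μ, 0 < ν ω)
    (hlog : Integrable (fun ω => Real.log (ν ω)) μ)
    (φ : ℝ → ℝ) (hφ : ∀ u, 0 ≤ u → φ u = ∫ ω, Real.exp (-u * ν ω) ∂μ)
    (η : Ω' → ℝ) (hη : Measurable η)
    (hcdf : ∀ x : ℝ, (μ' {ω | η ω ≤ x}).toReal = φ (Real.exp (-x))) :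
    ∫ ω, η ω ∂μ' = Real.eulerMascheroniConstant + ∫ ω, Real.log (ν ω) ∂μ := by
  have hlaw : IdentDistrib η (fun p : Ω × ℝ => log (ν p.1) - log p.2) μ' (μ.prod (expMeasure 1)) :=
    identDistrib_of_measure_setOf_le_eq hη.aemeasurable (by fun_prop) fun x => by
      rw [prod_expMeasure_one_setOf_log_sub_log_le hν hνpos, ← hφ _ (exp_nonneg _), ← hcdf,
        ENNReal.ofReal_toReal (measure_ne_top _ _)]
  rw [hlaw.integral_eq, integral_sub (hlog.comp_fst _) (integrable_log_expMeasure_one.comp_snd _),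
    integral_fun_fst (fun ω => log (ν ω)), integral_fun_snd log, integral_log_expMeasure_one]
  simp only [probReal_univ, one_smul]
  ring

/-- If `η` has distribution function `x ↦ φ(e^{-x})`, where `φ` is the Laplace
transform of a positive random variable `ν` with `E|ln ν| < ∞`, then
`E[η] = γ + E[ln ν]`. -/
theorem mean_delta_eq_gamma_add_meanLog
    {Ω : Type*} [MeasurableSpace Ω] (μ : Measure Ω) [IsProbabilityMeasure μ]
    {Ω' : Type*} [MeasurableSpace Ω'] (μ' : Measure Ω') [IsProbabilityMeasure μ']
    (ν : Ω → ℝ) (hν : Measurable ν) (hνpos : ∀ᵐ ω ∂μ, 0 < ν ω)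
    (hlog : Integrable (fun ω => Real.log (ν ω)) μ)
    (φ : ℝ → ℝ) (hφ : ∀ u, 0 ≤ u → φ u = ∫ ω, Real.exp (-u * ν ω) ∂μ)
    (η : Ω' → ℝ) (hη : Measurable η) (hηint : Integrable η μ')
    (hcdf : ∀ x : ℝ, (μ' {ω | η ω ≤ x}).toReal = φ (Real.exp (-x))) :
    ∫ ω, η ω ∂μ' = Real.eulerMascheroniConstant + ∫ ω, Real.log (ν ω) ∂μ :=
  mean_delta_eq_gamma_add_meanLog_general μ μ' ν hν hνpos hlog φ hφ η hη hcdf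
end

section
/- If ν has a strictly stable distribution with Laplace transform E[e^{-uν}] = exp(-c u^α), c > 0, 0 < α < 1, then E[ln ν] = (γ(1-α) + ln c)/α, where γ is the Euler–Mascheroni constant. -/
/-!
Mellin inversion of the Laplace transform: for `s > 0`,
`Γ(s) E[ν^{-s}] = ∫₀^∞ u^{s-1} E[e^{-uν}] du = ∫₀^∞ u^{s-1} e^{-c u^α} du = c^{-s/α} Γ(s/α) / α`,
so `E[ν^{-s}] = c^{-s/α} Γ(1 + s/α) / Γ(1 + s)`. Since `(1 - ν^{-s}) / s → ln ν` as `s → 0⁺`,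
dominated convergence turns this into `E[ln ν] = -(d/ds) E[ν^{-s}]` at `s = 0`, which
`Γ'(1) = -γ` evaluates.
-/

open MeasureTheory Real Set Filter Topology

lemma lintegral_rpow_mul_exp_neg_mul_rpow {p q b : ℝ} (hp : 0 < p) (hq : -1 < q) (hb : 0 < b) :
    ∫⁻ u in Ioi 0, ENNReal.ofReal (u ^ q) * ENNReal.ofReal (rexp (-b * u ^ p)) =
      ENNReal.ofReal (b ^ (-(q + 1) / p) * (1 / p) * Gamma ((q + 1) / p)) := by
  simp_rw [← ENNReal.ofReal_mul' (exp_pos _).le]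
  rw [← integral_rpow_mul_exp_neg_mul_rpow hp hq hb,
    ofReal_integral_eq_lintegral_ofReal (integrableOn_rpow_mul_exp_neg_mul_rpow hq hp hb)]
  filter_upwards [ae_restrict_mem measurableSet_Ioi] with u hu
  exact mul_nonneg (rpow_nonneg (le_of_lt hu) _) (exp_pos _).le

theorem ofReal_Gamma_mul_lintegral_rpow_neg {Ω : Type*} [MeasurableSpace Ω] {μ : Measure Ω}
    [SFinite μ] {X : Ω → ℝ} {s : ℝ} (hX : Measurable X) (hpos : ∀ᵐ ω ∂μ, 0 < X ω) (hs : 0 < s) :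
    ENNReal.ofReal (Gamma s) * ∫⁻ ω, ENNReal.ofReal (X ω ^ (-s)) ∂μ =
      ∫⁻ u in Ioi 0, ENNReal.ofReal (u ^ (s - 1)) * ∫⁻ ω, ENNReal.ofReal (rexp (-u * X ω)) ∂μ := by
  have hinner : ∀ᵐ ω ∂μ, ENNReal.ofReal (Gamma s) * ENNReal.ofReal (X ω ^ (-s)) =
      ∫⁻ u in Ioi 0, ENNReal.ofReal (u ^ (s - 1)) * ENNReal.ofReal (rexp (-u * X ω)) := by
    filter_upwards [hpos] with ω hω
    calc _ = ENNReal.ofReal (X ω ^ (-(s - 1 + 1) / 1) * (1 / 1) * Gamma ((s - 1 + 1) / 1)) := by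
          rw [← ENNReal.ofReal_mul (Gamma_pos_of_pos hs).le]
          simp [mul_comm]
      _ = _ := by
          rw [← lintegral_rpow_mul_exp_neg_mul_rpow one_pos (by linarith) hω]
          simp only [rpow_one, neg_mul, mul_comm (X ω)]
  calc _ = ∫⁻ ω, (∫⁻ u in Ioi 0,
        ENNReal.ofReal (u ^ (s - 1)) * ENNReal.ofReal (rexp (-u * X ω))) ∂μ := by
        rw [← lintegral_const_mul' _ _ ENNReal.ofReal_ne_top]
        exact lintegral_congr_ae hinner
    _ = _ := by
        rw [lintegral_lintegral_swap (by fun_prop)]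
        refine setLIntegral_congr_fun measurableSet_Ioi fun u _ => ?_
        exact lintegral_const_mul _ (by fun_prop)

noncomputable def stableNegMoment (c α s : ℝ) : ℝ :=
  c ^ (-(s / α)) * Gamma (1 + s / α) / Gamma (1 + s)

section StableLaw

variable {Ω : Type*} [MeasurableSpace Ω] {μ : Measure Ω} [IsProbabilityMeasure μ] {X : Ω → ℝ}
  {c α s : ℝ}

theorem lintegral_rpow_neg_eq_stableNegMoment (hX : Measurable X) (hpos : ∀ᵐ ω ∂μ, 0 < X ω)
    (hc : 0 < c) (hα : 0 < α)
    (hlap : ∀ u : ℝ, 0 ≤ u → ∫ ω, rexp (-u * X ω) ∂μ = rexp (-c * u ^ α)) (hs : 0 < s) :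
    ∫⁻ ω, ENNReal.ofReal (X ω ^ (-s)) ∂μ = ENNReal.ofReal (stableNegMoment c α s) := by
  have hΓ : 0 < Gamma s := Gamma_pos_of_pos hs
  have hlap_lintegral : ∀ u ∈ Ioi (0 : ℝ), ENNReal.ofReal (u ^ (s - 1)) *
      ∫⁻ ω, ENNReal.ofReal (rexp (-u * X ω)) ∂μ =
        ENNReal.ofReal (u ^ (s - 1)) * ENNReal.ofReal (rexp (-c * u ^ α)) := by
    intro u hu
    have hle : ∀ᵐ ω ∂μ, ‖rexp (-u * X ω)‖ ≤ 1 := by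
      filter_upwards [hpos] with ω hω
      rw [norm_of_nonneg (exp_pos _).le, exp_le_one_iff]
      nlinarith [mem_Ioi.mp hu]
    rw [← hlap u (le_of_lt hu), ofReal_integral_eq_lintegral_ofReal
      ((integrable_const 1).mono' (by fun_prop) hle) (Eventually.of_forall fun _ => (exp_pos _).le)]
  rw [← ENNReal.mul_right_inj (ENNReal.ofReal_pos.mpr hΓ).ne' ENNReal.ofReal_ne_top,
    ofReal_Gamma_mul_lintegral_rpow_neg hX hpos hs, setLIntegral_congr_fun measurableSet_Ioi hlap_lintegral,
    lintegral_rpow_mul_exp_neg_mul_rpow hα (by linarith) hc, ← ENNReal.ofReal_mul hΓ.le]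
  congr 1
  rw [stableNegMoment, add_comm 1 s, add_comm 1 (s / α), Gamma_add_one hs.ne',
    Gamma_add_one (div_pos hs hα).ne', sub_add_cancel, neg_div]
  field_simp

theorem integrable_rpow_neg_of_laplace (hX : Measurable X) (hpos : ∀ᵐ ω ∂μ, 0 < X ω)
    (hc : 0 < c) (hα : 0 < α)
    (hlap : ∀ u : ℝ, 0 ≤ u → ∫ ω, rexp (-u * X ω) ∂μ = rexp (-c * u ^ α)) (hs : 0 < s) :
    Integrable (fun ω => X ω ^ (-s)) μ := by
  refine ⟨(by fun_prop : Measurable _).aestronglyMeasurable, ?_⟩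
  have hnonneg : 0 ≤ᵐ[μ] fun ω => X ω ^ (-s) := by
    filter_upwards [hpos] with ω hω using (rpow_pos_of_pos hω _).le
  rw [hasFiniteIntegral_iff_ofReal hnonneg, lintegral_rpow_neg_eq_stableNegMoment hX hpos hc hα hlap hs]
  exact ENNReal.ofReal_lt_top

theorem integral_rpow_neg_of_laplace (hX : Measurable X) (hpos : ∀ᵐ ω ∂μ, 0 < X ω)
    (hc : 0 < c) (hα : 0 < α)
    (hlap : ∀ u : ℝ, 0 ≤ u → ∫ ω, rexp (-u * X ω) ∂μ = rexp (-c * u ^ α)) (hs : 0 < s) :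
    ∫ ω, X ω ^ (-s) ∂μ = stableNegMoment c α s := by
  rw [integral_eq_lintegral_of_nonneg_ae
      (by filter_upwards [hpos] with ω hω using (rpow_pos_of_pos hω _).le)
      (by fun_prop : Measurable _).aestronglyMeasurable,
    lintegral_rpow_neg_eq_stableNegMoment hX hpos hc hα hlap hs,
    ENNReal.toReal_ofReal (by unfold stableNegMoment; positivity)]

end StableLaw

lemma stableNegMoment_zero (c α : ℝ) : stableNegMoment c α 0 = 1 := by
  simp [stableNegMoment]

lemma hasDerivAt_Gamma_one_add_div (a : ℝ) :
    HasDerivAt (fun s => Gamma (1 + s / a)) (-eulerMascheroniConstant / a) 0 :=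
  (hasDerivAt_Gamma_one.comp_of_eq (0 : ℝ)
    (((hasDerivAt_id (0 : ℝ)).div_const a).const_add 1) (by simp)).congr_deriv (by ring)

lemma hasDerivAt_stableNegMoment_zero {c α : ℝ} (hc : 0 < c) (hα : α ≠ 0) :
    HasDerivAt (stableNegMoment c α) (-((eulerMascheroniConstant * (1 - α) + log c) / α)) 0 := by
  have hpow : HasDerivAt (fun s => c ^ (-(s / α))) (-(log c / α)) 0 :=
    ((hasStrictDerivAt_const_rpow hc _).hasDerivAt.comp_of_eq (0 : ℝ)
      ((hasDerivAt_id (0 : ℝ)).div_const α).neg rfl).congr_deriv (by simp; ring)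
  have hfun : stableNegMoment c α =
      fun s => c ^ (-(s / α)) * Gamma (1 + s / α) / Gamma (1 + s / 1) := by
    funext s; simp [stableNegMoment]
  rw [hfun]
  exact ((hpow.mul (hasDerivAt_Gamma_one_add_div α)).div (hasDerivAt_Gamma_one_add_div 1)
    (by simp)).congr_deriv (by simp; field_simp; ring)

section OneSubRpowNegDiv

variable {x s : ℝ}

lemma one_sub_rpow_neg_div_le_log (hx : 0 < x) (hs : 0 < s) : (1 - x ^ (-s)) / s ≤ log x := by
  rw [div_le_iff₀ hs, rpow_def_of_pos hx]
  linarith [add_one_le_exp (log x * -s)]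

lemma two_mul_one_sub_rpow_neg_half_le (hx : 0 < x) (hs : 0 < s) (hs2 : s ≤ 1 / 2) :
    2 * (1 - x ^ (-(1 / 2 : ℝ))) ≤ (1 - x ^ (-s)) / s := by
  have hy := rpow_nonneg hx.le (-(1 / 2 : ℝ))
  have hpow : x ^ (-s) = (1 + (x ^ (-(1 / 2 : ℝ)) - 1)) ^ (2 * s) := by
    rw [add_sub_cancel, ← rpow_mul hx.le]; ring_nf
  have hbernoulli := rpow_one_add_le_one_add_mul_self (s := x ^ (-(1 / 2 : ℝ)) - 1)
    (by linarith) (p := 2 * s) (by linarith) (by linarith)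
  rw [le_div_iff₀ hs]
  linarith

lemma abs_one_sub_rpow_neg_div_le (hx : 0 < x) (hs : 0 < s) (hs2 : s ≤ 1 / 2) :
    |(1 - x ^ (-s)) / s| ≤ |log x| + 2 * x ^ (-(1 / 2 : ℝ)) := by
  have hupper := one_sub_rpow_neg_div_le_log hx hs
  have hlower := two_mul_one_sub_rpow_neg_half_le hx hs hs2
  have hy := rpow_nonneg hx.le (-(1 / 2 : ℝ))
  rw [abs_le]
  constructor <;> linarith [abs_nonneg (log x), le_abs_self (log x)]

lemma tendsto_one_sub_rpow_neg_div {x : ℝ} (hx : 0 < x) :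
    Tendsto (fun s : ℝ => (1 - x ^ (-s)) / s) (𝓝[>] 0) (𝓝 (log x)) := by
  have hderiv : HasDerivAt (fun s : ℝ => x ^ (-s)) (-log x) 0 :=
    ((hasStrictDerivAt_const_rpow hx _).hasDerivAt.comp_of_eq (0 : ℝ)
      (hasDerivAt_neg (0 : ℝ)) rfl).congr_deriv (by simp)
  have := hderiv.tendsto_slope_zero_right.neg
  rw [neg_neg] at this
  refine this.congr fun s => ?_
  simp only [zero_add, neg_zero, rpow_zero, smul_eq_mul]
  ring

end OneSubRpowNegDiv

section LogMoment

variable {Ω : Type*} [MeasurableSpace Ω] {μ : Measure Ω} {X : Ω → ℝ}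

theorem tendsto_integral_one_sub_rpow_neg_div (hX : Measurable X) (hpos : ∀ᵐ ω ∂μ, 0 < X ω)
    (hhalf : Integrable (fun ω => X ω ^ (-(1 / 2 : ℝ))) μ)
    (hlog : Integrable (fun ω => log (X ω)) μ) :
    Tendsto (fun s : ℝ => ∫ ω, (1 - X ω ^ (-s)) / s ∂μ) (𝓝[>] 0)
      (𝓝 (∫ ω, log (X ω) ∂μ)) := by
  refine tendsto_integral_filter_of_dominated_convergence
    (fun ω => |log (X ω)| + 2 * X ω ^ (-(1 / 2 : ℝ)))
    (Eventually.of_forall fun s => (by fun_prop : Measurable _).aestronglyMeasurable) ?_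
    (hlog.abs.add (hhalf.const_mul 2)) ?_
  · filter_upwards [Ioc_mem_nhdsGT (by norm_num : (0 : ℝ) < 1 / 2)] with s hs
    filter_upwards [hpos] with ω hω
    exact abs_one_sub_rpow_neg_div_le hω hs.1 hs.2
  · filter_upwards [hpos] with ω hω using tendsto_one_sub_rpow_neg_div hω

theorem tendsto_one_sub_integral_rpow_neg_div [IsProbabilityMeasure μ] (hX : Measurable X)
    (hpos : ∀ᵐ ω ∂μ, 0 < X ω) (hint : ∀ s : ℝ, 0 < s → Integrable (fun ω => X ω ^ (-s)) μ)
    (hlog : Integrable (fun ω => log (X ω)) μ) :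
    Tendsto (fun s : ℝ => (1 - ∫ ω, X ω ^ (-s) ∂μ) / s) (𝓝[>] 0)
      (𝓝 (∫ ω, log (X ω) ∂μ)) := by
  refine (tendsto_integral_one_sub_rpow_neg_div hX hpos (hint _ (by norm_num)) hlog).congr' ?_
  filter_upwards [self_mem_nhdsWithin] with s hs
  rw [integral_div, integral_sub (integrable_const 1) (hint s hs), integral_const, probReal_univ,
    one_smul]

end LogMoment

theorem stable_mean_log_general
    {Ω : Type*} [MeasurableSpace Ω] (μ : Measure Ω) [IsProbabilityMeasure μ]
    (c α : ℝ) (hc : 0 < c) (hα : 0 < α)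
    (ν : Ω → ℝ) (hν : Measurable ν) (hνpos : ∀ᵐ ω ∂μ, 0 < ν ω)
    (hlap : ∀ u : ℝ, 0 ≤ u → ∫ ω, Real.exp (-u * ν ω) ∂μ = Real.exp (-c * u ^ α))
    (hlog : Integrable (fun ω => Real.log (ν ω)) μ) :
    ∫ ω, Real.log (ν ω) ∂μ
      = (Real.eulerMascheroniConstant * (1 - α) + Real.log c) / α := by
  have hmean := tendsto_one_sub_integral_rpow_neg_div hν hνpos
    (fun _ hs => integrable_rpow_neg_of_laplace hν hνpos hc hα hlap hs) hlog
  have hslope := (hasDerivAt_stableNegMoment_zero hc hα.ne').tendsto_slope_zero_right.neg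
  rw [neg_neg] at hslope
  refine tendsto_nhds_unique (hmean.congr' ?_) hslope
  filter_upwards [self_mem_nhdsWithin] with s hs
  rw [integral_rpow_neg_of_laplace hν hνpos hc hα hlap hs, zero_add, stableNegMoment_zero,
    smul_eq_mul]
  ring

/-- If `ν` has a strictly stable distribution with Laplace transform
`E[e^{-uν}] = exp(-c·u^α)`, `c > 0`, `0 < α < 1`, then
`E[ln ν] = (γ(1-α) + ln c)/α`. -/
theorem stable_mean_log
    {Ω : Type*} [MeasurableSpace Ω] (μ : Measure Ω) [IsProbabilityMeasure μ]
    (c α : ℝ) (hc : 0 < c) (hα : 0 < α) (hα1 : α < 1)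
    (ν : Ω → ℝ) (hν : Measurable ν) (hνpos : ∀ᵐ ω ∂μ, 0 < ν ω)
    (hlap : ∀ u : ℝ, 0 ≤ u → ∫ ω, Real.exp (-u * ν ω) ∂μ = Real.exp (-c * u ^ α))
    (hlog : Integrable (fun ω => Real.log (ν ω)) μ) :
    ∫ ω, Real.log (ν ω) ∂μ
      = (Real.eulerMascheroniConstant * (1 - α) + Real.log c) / α :=
  stable_mean_log_general μ c α hc hα ν hν hνpos hlap hlog
end

section
/- If η satisfies P(η > x) ~ 1/x as x → +∞ and P(η < -x) ≤ exp(-e^{x+1}) for x > 0, and (η_n) are i.i.d. copies of η, then for any β > 1 the random series Σ_{n=0}^∞ β^{-n} η_n converges almost surely. -/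
/-!
The two tail conditions give `P(|η| > x) = O(1/x)`, so for `1 < α < β` the events
`|η_n| > α ^ n` have probabilities bounded by a multiple of `α⁻¹ ^ n`, and by the first
Borel–Cantelli lemma only finitely many of them occur almost surely. Beyond that point `|η_n / β ^ n| ≤ (α / β) ^ n`, a convergent geometric series.
-/

open MeasureTheory ProbabilityTheory Filter Real

section

variable {Ω : Type*} [MeasurableSpace Ω] {μ : Measure Ω}

lemma exp_neg_exp_add_one_le_inv {x : ℝ} (hx : 0 < x) : exp (-exp (x + 1)) ≤ x⁻¹ := by
  rw [exp_neg]
  refine inv_anti₀ hx ?_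
  calc x ≤ x + 1 + 1 := by linarith
    _ ≤ exp (x + 1) := add_one_le_exp (x + 1)
    _ ≤ exp (exp (x + 1)) := (add_one_le_exp _).trans' (by linarith)

lemma measureReal_abs_gt_le (X : Ω → ℝ) (x : ℝ) :
    μ.real {ω | x < |X ω|} ≤ μ.real {ω | x < X ω} + μ.real {ω | X ω < -x} := by
  have hsplit : {ω | x < |X ω|} = {ω | x < X ω} ∪ {ω | X ω < -x} := by
    ext ω
    exact lt_abs.trans (or_congr_right (lt_neg (a := x)))
  rw [hsplit]
  exact measureReal_union_le _ _

lemma eventually_measureReal_abs_gt_le_of_superheavy {X : Ω → ℝ}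
    (htail : Tendsto (fun x : ℝ => x * μ.real {ω | x < X ω}) atTop (nhds 1))
    (hleft : ∀ x : ℝ, 0 < x → μ.real {ω | X ω < -x} ≤ exp (-exp (x + 1))) :
    ∀ᶠ x : ℝ in atTop, μ.real {ω | x < |X ω|} ≤ 3 / x := by
  filter_upwards [htail.eventually_lt_const (show (1 : ℝ) < 2 by norm_num),
    eventually_gt_atTop 0] with x hright hx
  have hright' : μ.real {ω | x < X ω} ≤ 2 / x := by
    rw [le_div_iff₀ hx]
    linarith
  calc μ.real {ω | x < |X ω|}
      ≤ μ.real {ω | x < X ω} + μ.real {ω | X ω < -x} := measureReal_abs_gt_le X x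
    _ ≤ 2 / x + x⁻¹ := add_le_add hright' ((hleft x hx).trans (exp_neg_exp_add_one_le_inv hx))
    _ = 3 / x := by ring

lemma summable_measureReal_abs_gt_pow {X : ℕ → Ω → ℝ}
    (hident : ∀ n, IdentDistrib (X n) (X 0) μ μ) {C : ℝ}
    (hC : ∀ᶠ x : ℝ in atTop, μ.real {ω | x < |X 0 ω|} ≤ C / x) {α : ℝ} (hα : 1 < α) :
    Summable fun n => μ.real {ω | α ^ n < |X n ω|} := by
  have hgeom : Summable fun n : ℕ => C * α⁻¹ ^ n :=
    (summable_geometric_of_lt_one (by positivity) (inv_lt_one_of_one_lt₀ hα)).mul_left C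
  refine hgeom.of_norm_bounded_eventually_nat ?_
  filter_upwards [(tendsto_pow_atTop_atTop_of_one_lt hα).eventually hC] with n hn
  have hlaw : μ.real {ω | α ^ n < |X n ω|} = μ.real {ω | α ^ n < |X 0 ω|} :=
    congrArg ENNReal.toReal <|
      (hident n).measure_mem_eq (measurableSet_lt measurable_const measurable_id.abs)
  rw [norm_of_nonneg measureReal_nonneg, hlaw, inv_pow, ← div_eq_mul_inv]
  exact hn

lemma ae_eventually_notMem_of_summable_measureReal [IsFiniteMeasure μ] {s : ℕ → Set Ω}
    (hs : Summable fun n => μ.real (s n)) : ∀ᵐ ω ∂μ, ∀ᶠ n in atTop, ω ∉ s n := by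
  refine ae_eventually_notMem ?_
  have h := hs.tsum_ofReal_ne_top
  rwa [tsum_congr fun n => ofReal_measureReal (μ := μ) (s := s n)] at h

lemma summable_div_pow_of_eventually_abs_le_pow {a : ℕ → ℝ} {α β : ℝ} (hα : 0 ≤ α)
    (hαβ : α < β) (ha : ∀ᶠ n in atTop, |a n| ≤ α ^ n) : Summable fun n => a n / β ^ n := by
  have hβ : 0 < β := hα.trans_lt hαβ
  refine (summable_geometric_of_lt_one (div_nonneg hα hβ.le)
    ((div_lt_one hβ).mpr hαβ)).of_norm_bounded_eventually_nat ?_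
  filter_upwards [ha] with n hn
  rw [norm_div, norm_pow, norm_of_nonneg hβ.le, div_pow, Real.norm_eq_abs]
  gcongr

theorem ae_summable_div_pow_of_tail_le_div [IsFiniteMeasure μ] {X : ℕ → Ω → ℝ}
    (hident : ∀ n, IdentDistrib (X n) (X 0) μ μ) {C : ℝ}
    (hC : ∀ᶠ x : ℝ in atTop, μ.real {ω | x < |X 0 ω|} ≤ C / x) {β : ℝ} (hβ : 1 < β) :
    ∀ᵐ ω ∂μ, Summable fun n => X n ω / β ^ n := by
  obtain ⟨α, hα, hαβ⟩ := exists_between hβ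
  filter_upwards [ae_eventually_notMem_of_summable_measureReal
    (summable_measureReal_abs_gt_pow hident hC hα)] with ω hω
  refine summable_div_pow_of_eventually_abs_le_pow (by positivity) hαβ ?_
  filter_upwards [hω] with n hn
  exact not_lt.mp hn

end

theorem series_converges_superheavy_general
    {Ω : Type*} [MeasurableSpace Ω] (μ : Measure Ω) [IsProbabilityMeasure μ]
    (η : ℕ → Ω → ℝ) (hmeas : ∀ n, Measurable (η n))
    (hident : ∀ n, Measure.map (η n) μ = Measure.map (η 0) μ)
    (htail : Tendsto (fun x : ℝ => x * (μ {ω | x < η 0 ω}).toReal) atTop (nhds 1))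
    (hleft : ∀ x : ℝ, 0 < x → (μ {ω | η 0 ω < -x}).toReal ≤ Real.exp (-Real.exp (x + 1)))
    (β : ℝ) (hβ : 1 < β) :
    ∀ᵐ ω ∂μ, Summable (fun n : ℕ => η n ω / β ^ n) :=
  ae_summable_div_pow_of_tail_le_div
    (fun n => ⟨(hmeas n).aemeasurable, (hmeas 0).aemeasurable, hident n⟩)
    (eventually_measureReal_abs_gt_le_of_superheavy htail hleft) hβ

/-- If `η` satisfies `P(η > x) ~ 1/x` as `x → +∞` and
`P(η < -x) ≤ exp(-e^{x+1})` for `x > 0`, and `(η_n)` are i.i.d. copies of `η`,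
then for any `β > 1` the random series `Σ_{n=0}^∞ β^{-n} η_n` converges a.s. -/
theorem series_converges_superheavy
    {Ω : Type*} [MeasurableSpace Ω] (μ : Measure Ω) [IsProbabilityMeasure μ]
    (η : ℕ → Ω → ℝ) (hmeas : ∀ n, Measurable (η n))
    (hindep : iIndepFun η μ)
    (hident : ∀ n, Measure.map (η n) μ = Measure.map (η 0) μ)
    (htail : Tendsto (fun x : ℝ => x * (μ {ω | x < η 0 ω}).toReal) atTop (nhds 1))
    (hleft : ∀ x : ℝ, 0 < x → (μ {ω | η 0 ω < -x}).toReal ≤ Real.exp (-Real.exp (x + 1)))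
    (β : ℝ) (hβ : 1 < β) :
    ∀ᵐ ω ∂μ, Summable (fun n : ℕ => η n ω / β ^ n) :=
  series_converges_superheavy_general μ η hmeas hident htail hleft β hβ
end

section
/- If G(x) = 1 - 1/ln x for x ≥ e is the distribution function of ν, then its Laplace transform satisfies 1 - φ(u) ~ -1/ln u as u → 0⁺, and consequently P(η > x) = 1 - φ(e^{-x}) ~ 1/x as x → +∞, where η has distribution function x ↦ φ(e^{-x}). -/
/-!
Write `1 - φ u = E[1 - exp (-u ν)]`. Since `1 - exp (-t)` lies between `(1 - exp (-T)) 1{t > T}`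
and `min t 1`, for all thresholds `s, A` the quantity `1 - φ u` is squeezed between
`(1 - exp (-u s)) P(ν > s)` and `u A + P(ν > A)`, where `P(ν > x) = 1 / log x`. Taking
`s = T / u` and `A = u ^ (-c)` with `c < 1` gives `1 - exp (-T) ≲ (1 - φ u) (-log u) ≲ 1 / c`
as `u → 0⁺`, and letting `T → ∞`, `c → 1` gives the first claim.
The second is the substitution `u = exp (-x)`.
-/

open MeasureTheory Filter Real Set Topology

lemma one_sub_exp_neg_mul_le_add_indicator {u A : ℝ} (hu : 0 ≤ u) (hA : 0 ≤ A) (x : ℝ) :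
    1 - exp (-u * x) ≤ u * A + (Ioi A).indicator 1 x := by
  by_cases hx : A < x
  · rw [indicator_of_mem (mem_Ioi.2 hx), Pi.one_apply]
    nlinarith [exp_pos (-u * x), mul_nonneg hu hA]
  · rw [indicator_of_notMem (mt mem_Ioi.1 hx)]
    nlinarith [add_one_le_exp (-u * x), mul_le_mul_of_nonneg_left (not_lt.1 hx) hu]

lemma indicator_le_one_sub_exp_neg_mul {u x : ℝ} (hu : 0 ≤ u) (hx : 0 ≤ x) (s : ℝ) :
    (Ioi s).indicator (fun _ => 1 - exp (-(u * s))) x ≤ 1 - exp (-u * x) := by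
  by_cases hsx : s < x
  · rw [indicator_of_mem (mem_Ioi.2 hsx)]
    have : exp (-u * x) ≤ exp (-(u * s)) := exp_le_exp.2 (by nlinarith)
    linarith
  · rw [indicator_of_notMem (mt mem_Ioi.1 hsx), sub_nonneg]
    exact exp_le_one_iff.2 (by nlinarith)

section LaplaceTransform

variable {Ω : Type*} [MeasurableSpace Ω] {μ : Measure Ω} [IsProbabilityMeasure μ] {X : Ω → ℝ}

lemma integrable_exp_neg_mul_s14 (hX : Measurable X) (hX0 : ∀ᵐ ω ∂μ, 0 ≤ X ω) {u : ℝ} (hu : 0 ≤ u) :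
    Integrable (fun ω => exp (-u * X ω)) μ := by
  refine .of_bound (hX.const_mul (-u)).exp.aestronglyMeasurable 1 ?_
  filter_upwards [hX0] with ω hω
  rw [norm_of_nonneg (exp_pos _).le, exp_le_one_iff]
  nlinarith

lemma integral_one_sub_exp_neg_mul (hX : Measurable X) (hX0 : ∀ᵐ ω ∂μ, 0 ≤ X ω) {u : ℝ}
    (hu : 0 ≤ u) : ∫ ω, (1 - exp (-u * X ω)) ∂μ = 1 - ∫ ω, exp (-u * X ω) ∂μ := by
  rw [integral_sub (integrable_const 1) (integrable_exp_neg_mul_s14 hX hX0 hu), integral_const,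
    probReal_univ, one_smul]

lemma mul_measureReal_lt_le_one_sub_integral_exp (hX : Measurable X) (hX0 : ∀ᵐ ω ∂μ, 0 ≤ X ω)
    {u : ℝ} (hu : 0 ≤ u) (s : ℝ) :
    (1 - exp (-(u * s))) * μ.real {ω | s < X ω} ≤ 1 - ∫ ω, exp (-u * X ω) ∂μ := by
  change _ * μ.real (X ⁻¹' Ioi s) ≤ _
  rw [← integral_one_sub_exp_neg_mul hX hX0 hu, mul_comm, ← smul_eq_mul,
    ← integral_indicator_const _ (hX measurableSet_Ioi)]
  refine integral_mono_ae ((integrable_const _).indicator (hX measurableSet_Ioi))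
    ((integrable_const 1).sub (integrable_exp_neg_mul_s14 hX hX0 hu)) ?_
  filter_upwards [hX0] with ω hω
  exact indicator_le_one_sub_exp_neg_mul hu hω s

lemma one_sub_integral_exp_le_add_measureReal_lt (hX : Measurable X) (hX0 : ∀ᵐ ω ∂μ, 0 ≤ X ω)
    {u A : ℝ} (hu : 0 ≤ u) (hA : 0 ≤ A) :
    1 - ∫ ω, exp (-u * X ω) ∂μ ≤ u * A + μ.real {ω | A < X ω} := by
  have hint : Integrable ((X ⁻¹' Ioi A).indicator (1 : Ω → ℝ)) μ :=
    (integrable_const 1).indicator (hX measurableSet_Ioi)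
  have hbound : ∫ ω, (u * A + (X ⁻¹' Ioi A).indicator 1 ω) ∂μ =
      u * A + μ.real {ω | A < X ω} := by
    rw [integral_add (integrable_const _) hint, integral_const, probReal_univ, one_smul,
      integral_indicator_one (hX measurableSet_Ioi)]
    rfl
  rw [← integral_one_sub_exp_neg_mul hX hX0 hu, ← hbound]
  exact integral_mono ((integrable_const 1).sub (integrable_exp_neg_mul_s14 hX hX0 hu))
    ((integrable_const _).add hint) fun ω => one_sub_exp_neg_mul_le_add_indicator hu hA (X ω)

end LaplaceTransform

lemma tendsto_neg_log_nhdsGT_zero : Tendsto (fun u => -log u) (𝓝[>] 0) atTop :=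
  tendsto_neg_atBot_atTop.comp tendsto_log_nhdsGT_zero

lemma eventually_lt_mul_neg_log_of_lower_bound {F : ℝ → ℝ}
    (hlow : ∀ u s, 0 < u → exp 1 ≤ s → (1 - exp (-(u * s))) / log s ≤ F u)
    {a : ℝ} (ha : a < 1) : ∀ᶠ u in 𝓝[>] 0, a < F u * -log u := by
  obtain ⟨T, haT, hT⟩ : ∃ T, a < 1 - exp (-T) ∧ 0 < T := by
    have : Tendsto (fun T => 1 - exp (-T)) atTop (𝓝 (1 - 0)) :=
      tendsto_exp_neg_atTop_nhds_zero.const_sub 1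
    rw [sub_zero] at this
    exact ((this.eventually (lt_mem_nhds ha)).and (eventually_gt_atTop 0)).exists
  have hlim : Tendsto (fun u => (1 - exp (-T)) / (log T / -log u + 1)) (𝓝[>] 0)
      (𝓝 (1 - exp (-T))) := by
    have := (tendsto_const_nhds (x := 1 - exp (-T))).div
      (((tendsto_const_nhds (x := log T)).div_atTop tendsto_neg_log_nhdsGT_zero).add_const 1)
      (by norm_num)
    rwa [zero_add, div_one] at this
  have hsmall : ∀ᶠ u in 𝓝[>] (0 : ℝ), u < T / exp 1 :=
    eventually_nhdsWithin_of_eventually_nhds (gt_mem_nhds (by positivity))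
  filter_upwards [hlim.eventually (lt_mem_nhds haT),
    tendsto_neg_log_nhdsGT_zero.eventually_gt_atTop 0, hsmall, self_mem_nhdsWithin]
    with u hau hL hu hu0
  have hu0 : 0 < u := hu0
  have hs : exp 1 ≤ T / u := by
    rw [lt_div_iff₀ (exp_pos 1)] at hu
    rw [le_div_iff₀ hu0]
    linarith
  have hlog : log (T / u) = log T + -log u := by
    rw [log_div hT.ne' hu0.ne']; ring
  calc a < (1 - exp (-T)) / (log T / -log u + 1) := hau
    _ = (1 - exp (-(u * (T / u)))) / log (T / u) * -log u := by
      rw [mul_div_cancel₀ T hu0.ne', hlog, div_add_one hL.ne', div_div_eq_mul_div,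
        div_mul_eq_mul_div]
    _ ≤ F u * -log u := by gcongr; exact hlow u _ hu0 hs

lemma eventually_mul_neg_log_lt_of_upper_bound {F : ℝ → ℝ}
    (hup : ∀ u A, 0 < u → exp 1 ≤ A → F u ≤ u * A + 1 / log A)
    {a : ℝ} (ha : 1 < a) : ∀ᶠ u in 𝓝[>] 0, F u * -log u < a := by
  obtain ⟨c, hac, hc1⟩ := exists_between (inv_lt_one_of_one_lt₀ ha)
  have hc0 : 0 < c := (inv_pos.2 (zero_lt_one.trans ha)).trans hac
  have hlim : Tendsto (fun u => u ^ (1 - c) * -log u + c⁻¹) (𝓝[>] 0) (𝓝 c⁻¹) := by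
    simpa [mul_comm] using ((tendsto_log_mul_rpow_nhdsGT_zero (sub_pos.2 hc1)).neg).add_const c⁻¹
  filter_upwards [hlim.eventually (gt_mem_nhds (inv_lt_of_inv_lt₀ (zero_lt_one.trans ha) hac)),
    tendsto_neg_log_nhdsGT_zero.eventually_ge_atTop c⁻¹, self_mem_nhdsWithin] with u hua hL hu0
  have hu0 : 0 < u := hu0
  have hcL : 1 ≤ c * -log u := by rwa [← inv_le_iff_one_le_mul₀' hc0]
  calc F u * -log u ≤ (u * exp (c * -log u) + 1 / log (exp (c * -log u))) * -log u := by
        gcongr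
        · exact (inv_pos.2 hc0).le.trans hL
        · exact hup u _ hu0 (exp_le_exp.2 hcL)
    _ = u ^ (1 - c) * -log u + c⁻¹ := by
      have hexp : u * exp (c * -log u) = exp (log u * (1 - c)) := by
        nth_rewrite 1 [← exp_log hu0]
        rw [← exp_add]; ring_nf
      have hL0 : log u ≠ 0 := neg_ne_zero.1 ((inv_pos.2 hc0).trans_le hL).ne'
      rw [log_exp, rpow_def_of_pos hu0, ← hexp]
      field_simp
      ring
    _ < a := hua

lemma tendsto_mul_neg_log_of_bounds {F : ℝ → ℝ}
    (hlow : ∀ u s, 0 < u → exp 1 ≤ s → (1 - exp (-(u * s))) / log s ≤ F u)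
    (hup : ∀ u A, 0 < u → exp 1 ≤ A → F u ≤ u * A + 1 / log A) :
    Tendsto (fun u => F u * -log u) (𝓝[>] 0) (𝓝 1) :=
  tendsto_order.2 ⟨fun _ ha => eventually_lt_mul_neg_log_of_lower_bound hlow ha,
    fun _ ha => eventually_mul_neg_log_lt_of_upper_bound hup ha⟩

lemma tendsto_exp_neg_atTop_nhdsGT_zero : Tendsto (fun x => exp (-x)) atTop (𝓝[>] 0) :=
  tendsto_nhdsWithin_iff.2 ⟨tendsto_exp_neg_atTop_nhds_zero, .of_forall fun _ => exp_pos _⟩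

/-- If `ν` has distribution function `G(x) = 1 - 1/ln x` for `x ≥ e`, then its
Laplace transform satisfies `1 - φ(u) ~ -1/ln u` as `u → 0⁺`, and consequently
`P(η > x) = 1 - φ(e^{-x}) ~ 1/x` as `x → +∞`. -/
theorem superheavy_laplace_asymptotics
    {Ω : Type*} [MeasurableSpace Ω] (μ : Measure Ω) [IsProbabilityMeasure μ]
    (ν : Ω → ℝ) (hν : Measurable ν) (hνe : ∀ᵐ ω ∂μ, Real.exp 1 ≤ ν ω)
    (hcdf : ∀ x : ℝ, Real.exp 1 ≤ x → (μ {ω | ν ω ≤ x}).toReal = 1 - 1 / Real.log x)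
    (φ : ℝ → ℝ) (hφ : ∀ u : ℝ, 0 ≤ u → φ u = ∫ ω, Real.exp (-u * ν ω) ∂μ) :
    Tendsto (fun u : ℝ => (1 - φ u) / (-1 / Real.log u)) (nhdsWithin 0 (Set.Ioi 0)) (nhds 1) ∧
    Tendsto (fun x : ℝ => (1 - φ (Real.exp (-x))) / (1 / x)) atTop (nhds 1) := by
  have hν0 : ∀ᵐ ω ∂μ, 0 ≤ ν ω := hνe.mono fun _ h => (exp_pos 1).le.trans h
  have htail : ∀ x, exp 1 ≤ x → μ.real {ω | x < ν ω} = 1 / log x := fun x hx => by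
    have hcompl : {ω | x < ν ω} = {ω | ν ω ≤ x}ᶜ := by ext; simp
    rw [hcompl, probReal_compl_eq_one_sub (measurableSet_le hν measurable_const),
      measureReal_def, hcdf x hx, sub_sub_cancel]
  have key : Tendsto (fun u => (1 - φ u) * -log u) (𝓝[>] 0) (𝓝 1) := by
    refine tendsto_mul_neg_log_of_bounds (fun u s hu hs => ?_) (fun u A hu hA => ?_)
    · rw [hφ u hu.le, ← mul_one_div, ← htail s hs]
      exact mul_measureReal_lt_le_one_sub_integral_exp hν hν0 hu.le s
    · rw [hφ u hu.le, ← htail A hA]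
      exact one_sub_integral_exp_le_add_measureReal_lt hν hν0 hu.le
        ((exp_pos 1).le.trans hA)
  -- both rewritings hold for every argument, also where the divisor is `0` (`x / 0 = 0`)
  refine ⟨key.congr fun u => ?_, (key.comp tendsto_exp_neg_atTop_nhdsGT_zero).congr fun x => ?_⟩
  · rw [neg_div, one_div, div_neg, div_inv_eq_mul, mul_neg]
  · simp [log_exp]
end

section
/- Convexity inequality for the mixing condition: if φ : [0,∞) → (0,1] is convex and decreasing, then for all 0 < u₁ ≤ u ≤ u₂ and values 0 ≤ a' ≤ b' (playing the roles of -ln F(a) ≥ -ln F(b) ≥ 0), one has φ(u·b') - φ(u·a') ≥ (u₁/u₂)·(φ(u₂·b') - φ(u₂·a')). -/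
open Set

/-!
Put `g t = φ (t b') - φ (t a')`. The chord of `φ` over `[t b', t a']` has slope `-g t / (t (a' - b'))`,
and secant slopes of a convex function increase when both endpoints move right, so `g t / t` is
antitone on `t > 0`. Hence `g u ≥ (u / u₂) g u₂ ≥ (u₁ / u₂) g u₂`, the last step because `g u₂ ≥ 0`
for antitone `φ`.
-/

section slope

variable {𝕜 : Type*} [Field 𝕜] [LinearOrder 𝕜] [IsStrictOrderedRing 𝕜] {s : Set 𝕜} {f : 𝕜 → 𝕜}

theorem ConvexOn.slope_le_slope_of_le {x y x' y' : 𝕜} (hf : ConvexOn 𝕜 s f)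
    (hx : x ∈ s) (hy : y ∈ s) (hx' : x' ∈ s) (hy' : y' ∈ s)
    (hxy : x < y) (hxy' : x' < y') (hxx' : x ≤ x') (hyy' : y ≤ y') :
    slope f x y ≤ slope f x' y' :=
  calc slope f x y ≤ slope f x y' :=
        hf.slope_mono hx ⟨hy, hxy.ne'⟩ ⟨hy', (hxy.trans_le hyy').ne'⟩ hyy'
    _ = slope f y' x := slope_comm f x y'
    _ ≤ slope f y' x' :=
        hf.slope_mono hy' ⟨hx, (hxy.trans_le hyy').ne⟩ ⟨hx', hxy'.ne⟩ hxx'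
    _ = slope f x' y' := slope_comm f y' x'

end slope

theorem ConvexOn.antitoneOn_div_sub_comp_mul {φ : ℝ → ℝ} (hconv : ConvexOn ℝ (Ici 0) φ)
    {a b : ℝ} (hb : 0 ≤ b) (hba : b ≤ a) :
    AntitoneOn (fun t ↦ (φ (t * b) - φ (t * a)) / t) (Ioi 0) := by
  intro t (ht : 0 < t) t' (ht' : 0 < t') htt'
  rcases hba.eq_or_lt with rfl | hba
  · simp
  have ha : 0 ≤ a := hb.trans hba.le
  have hslope_eq : ∀ r, slope φ (r * b) (r * a) = -((φ (r * b) - φ (r * a)) / r) / (a - b) := by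
    intro r
    rw [slope_def_field, ← mul_sub, ← div_div, ← neg_sub (φ (r * b)), neg_div r]
  have hslope : slope φ (t * b) (t * a) ≤ slope φ (t' * b) (t' * a) :=
    hconv.slope_le_slope_of_le (mem_Ici.2 (by positivity)) (mem_Ici.2 (by positivity))
      (mem_Ici.2 (by positivity)) (mem_Ici.2 (by positivity)) (by gcongr) (by gcongr)
      (by gcongr) (by gcongr)
  rwa [hslope_eq, hslope_eq, div_le_div_iff_of_pos_right (sub_pos.2 hba), neg_le_neg_iff] at hslope

theorem convex_mixing_inequality_general
    (φ : ℝ → ℝ) (hconv : ConvexOn ℝ (Ici 0) φ) (hanti : AntitoneOn φ (Ici 0))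
    (u₁ u u₂ : ℝ) (hu₁ : 0 < u₁) (h₁ : u₁ ≤ u) (h₂ : u ≤ u₂)
    (a' b' : ℝ) (hb' : 0 ≤ b') (hba : b' ≤ a') :
    u₁ / u₂ * (φ (u₂ * b') - φ (u₂ * a')) ≤ φ (u * b') - φ (u * a') := by
  have hu : 0 < u := hu₁.trans_le h₁
  have hu₂ : 0 < u₂ := hu.trans_le h₂
  have ha' : 0 ≤ a' := hb'.trans hba
  have hg₂ : 0 ≤ φ (u₂ * b') - φ (u₂ * a') :=
    sub_nonneg.2 <| hanti (mem_Ici.2 (by positivity)) (mem_Ici.2 (by positivity)) (by gcongr)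
  have hdiv := hconv.antitoneOn_div_sub_comp_mul hb' hba (mem_Ioi.2 hu) (mem_Ioi.2 hu₂) h₂
  calc u₁ / u₂ * (φ (u₂ * b') - φ (u₂ * a'))
      ≤ u * ((φ (u₂ * b') - φ (u₂ * a')) / u₂) := by
        rw [div_mul_eq_mul_div, mul_div_assoc]; gcongr
    _ ≤ u * ((φ (u * b') - φ (u * a')) / u) := by gcongr
    _ = φ (u * b') - φ (u * a') := mul_div_cancel₀ _ hu.ne'

/-- Convexity inequality used for the mixing condition: if `φ : [0,∞) → (0,1]`
is convex and nonincreasing, then for `0 < u₁ ≤ u ≤ u₂` and `0 ≤ b' ≤ a'`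
(with `b' = -ln F(b)`, `a' = -ln F(a)`, `a < b`, so both differences below are
nonnegative), one has `φ(u·b') - φ(u·a') ≥ (u₁/u₂)·(φ(u₂·b') - φ(u₂·a'))`. -/
theorem convex_mixing_inequality
    (φ : ℝ → ℝ) (hconv : ConvexOn ℝ (Ici 0) φ) (hanti : AntitoneOn φ (Ici 0))
    (hrange : ∀ u ∈ Ici (0:ℝ), φ u ∈ Ioc (0:ℝ) 1)
    (u₁ u u₂ : ℝ) (hu₁ : 0 < u₁) (h₁ : u₁ ≤ u) (h₂ : u ≤ u₂)
    (a' b' : ℝ) (hb' : 0 ≤ b') (hba : b' ≤ a') :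
    u₁ / u₂ * (φ (u₂ * b') - φ (u₂ * a')) ≤ φ (u * b') - φ (u * a') :=
  convex_mixing_inequality_general φ hconv hanti u₁ u u₂ hu₁ h₁ h₂ a' b' hb' hba
end
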